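/- arXiv:math/0403204 — 2 statements merged into one kernel-verified Lean document; each statement's English description precedes it below -/
import Mathlib

section
/- Let f : R → S be a ring homomorphism such that for every prime ideal P of S the prime radical √(f^{-1}(P)) is nilpotent modulo f^{-1}(P) (i.e., some power of √(f^{-1}(P)) is contained in f^{-1}(P)). Then for every ideal I of R: r^{[-1]}V_R(I) = {P ∈ Spec S : f^{-1}(P) ⊇ I^t for some positive integer t} = {P ∈ Spec S : P ⊇ f(I)^t for some positive integer t} = ⋃_{t ≥ 1} V_S(f(I)^t), where f(I)^t denotes the set of products of t elements of f(I). -/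
/-- A two-sided ideal `P` of `A` is prime: it is proper, and for all two-sided ideals
`I, J`, `IJ ⊆ P` implies `I ⊆ P` or `J ⊆ P` (the product condition is expressed
elementwise on generators, which is equivalent since `P` is closed under addition). -/
def IsPrimeTwoSided {A : Type*} [Ring A] (P : TwoSidedIdeal A) : Prop :=
  P ≠ ⊤ ∧ ∀ I J : TwoSidedIdeal A, (∀ a ∈ I, ∀ b ∈ J, a * b ∈ P) → I ≤ P ∨ J ≤ P

/-- `V_A(X)`: the Zariski-closed subset of `Spec A` determined by `X ⊆ A`. -/
def zarV {A : Type*} [Ring A] (X : Set A) : Set (TwoSidedIdeal A) :=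
  {P | IsPrimeTwoSided P ∧ X ⊆ (P : Set A)}

/-- The prime radical of a subset `X ⊆ A`: the intersection of all prime (two-sided)
ideals containing `X`. -/
def primeRad {A : Type*} [Ring A] (X : Set A) : Set A :=
  {a | ∀ P : TwoSidedIdeal A, IsPrimeTwoSided P → X ⊆ (P : Set A) → a ∈ P}

/-- `Q` is a prime ideal of `A` minimal over the subset `X`. -/
def minimalOver {A : Type*} [Ring A] (X : Set A) (Q : TwoSidedIdeal A) : Prop :=
  IsPrimeTwoSided Q ∧ X ⊆ (Q : Set A) ∧
    ∀ Q' : TwoSidedIdeal A, IsPrimeTwoSided Q' → X ⊆ (Q' : Set A) → Q' ≤ Q → Q' = Q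

/-- The canonical correspondence `r : Spec S → Spec R` attached to `f : R →+* S`,
sending `P` to the set of primes of `R` minimal over `f⁻¹(P)`. -/
def rCorr {R S : Type*} [Ring R] [Ring S] (f : R →+* S) (P : TwoSidedIdeal S) :
    Set (TwoSidedIdeal R) :=
  {Q | minimalOver (f ⁻¹' (P : Set S)) Q}

lemma tsi_eq_top_iff' {A : Type*} [Ring A] (P : TwoSidedIdeal A) :
    P = ⊤ ↔ ∀ x : A, x ∈ P :=
  ⟨fun h x => h ▸ TwoSidedIdeal.mem_top _, fun h => le_antisymm le_top (fun x _ => h x)⟩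

/-- If all `t`-fold products of elements of `I` lie in the prime `Q`, then `I ≤ Q`. -/
lemma pow_subset_prime {A : Type*} [Ring A] :
    ∀ t : ℕ, 0 < t → ∀ (I Q : TwoSidedIdeal A), IsPrimeTwoSided Q →
      (∀ l : List A, l.length = t → (∀ x ∈ l, x ∈ I) → l.prod ∈ Q) → I ≤ Q := by
  intro t
  induction t with
  | zero => omega
  | succ n ih =>
    intro _ I Q hQ h
    rcases Nat.eq_zero_or_pos n with rfl | hn
    · intro x hx
      have := h [x] rfl (by simpa using hx)
      simpa using this
    · -- auxiliary ideal J = {b | ∀ a ∈ I, a * b ∈ Q}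
      let J : TwoSidedIdeal A := TwoSidedIdeal.mk' {b | ∀ a ∈ I, a * b ∈ Q}
        (fun a _ => by rw [mul_zero]; exact Q.zero_mem)
        (fun {x y} hx hy a ha => by rw [mul_add]; exact Q.add_mem (hx a ha) (hy a ha))
        (fun {x} hx a ha => by rw [mul_neg]; exact Q.neg_mem (hx a ha))
        (fun {x y} hy a ha => by
          rw [← mul_assoc]; exact hy _ (I.mul_mem_right a x ha))
        (fun {x y} hx a ha => by
          rw [← mul_assoc]; exact Q.mul_mem_right _ y (hx a ha))
      have hJ : ∀ b, b ∈ J ↔ ∀ a ∈ I, a * b ∈ Q := fun b =>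
        TwoSidedIdeal.mem_mk' _ _ _ _ _ _ b
      rcases hQ.2 I J (fun a ha b hb => (hJ b).1 hb a ha) with hIQ | hJQ
      · exact hIQ
      · refine ih hn I Q hQ (fun l hl hlI => hJQ ?_)
        rw [hJ]
        intro a ha
        have : (a :: l).prod ∈ Q := h (a :: l) (by simp [hl]) (by
          intro x hx
          rcases List.mem_cons.1 hx with rfl | hx
          · exact ha
          · exact hlI x hx)
        simpa using this

/-- The infimum of a nonempty chain of primes is prime. -/
lemma chain_sInf_prime {A : Type*} [Ring A] (c : Set (TwoSidedIdeal A))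
    (hc : IsChain (· ≤ ·) c) (hne : c.Nonempty)
    (hp : ∀ Q ∈ c, IsPrimeTwoSided Q) : IsPrimeTwoSided (sInf c) := by
  obtain ⟨Q₀, hQ₀⟩ := hne
  constructor
  · intro h
    apply (hp Q₀ hQ₀).1
    rw [tsi_eq_top_iff']
    intro x
    have : x ∈ sInf c := h ▸ TwoSidedIdeal.mem_top _
    exact (TwoSidedIdeal.mem_sInf A).1 this Q₀ hQ₀
  · intro I J hIJ
    by_contra hcon
    push_neg at hcon
    obtain ⟨hI, hJ⟩ := hcon
    rw [TwoSidedIdeal.le_iff, Set.not_subset] at hI hJ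
    obtain ⟨a, haI, ha⟩ := hI
    obtain ⟨b, hbJ, hb⟩ := hJ
    rw [SetLike.mem_coe, TwoSidedIdeal.mem_sInf A] at ha hb
    push_neg at ha hb
    obtain ⟨P₀, hP₀c, haP₀⟩ := ha
    obtain ⟨P₁, hP₁c, hbP₁⟩ := hb
    have key : ∀ P ∈ c, a ∉ P → b ∉ P → False := by
      intro P hPc haP hbP
      rcases (hp P hPc).2 I J (fun x hx y hy =>
        (TwoSidedIdeal.mem_sInf A).1 (hIJ x hx y hy) P hPc) with h | h
      · exact haP (h haI)
      · exact hbP (h hbJ)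
    rcases hc.total hP₀c hP₁c with hle | hle
    · exact key P₀ hP₀c haP₀ (fun hbP₀ => hbP₁ (hle hbP₀))
    · exact key P₁ hP₁c (fun haP₁ => haP₀ (hle haP₁)) hbP₁

/-- Every prime containing `X` contains a prime minimal over `X`. -/
lemma exists_minimal_prime {A : Type*} [Ring A] (X : Set A) (Q'' : TwoSidedIdeal A)
    (hQ'' : IsPrimeTwoSided Q'') (hX : X ⊆ (Q'' : Set A)) :
    ∃ Q : TwoSidedIdeal A, minimalOver X Q ∧ Q ≤ Q'' := by
  let s : Set (TwoSidedIdeal A)ᵒᵈ :=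
    {Q | IsPrimeTwoSided (OrderDual.ofDual Q) ∧ X ⊆ ((OrderDual.ofDual Q : TwoSidedIdeal A) : Set A)
      ∧ OrderDual.ofDual Q ≤ Q''}
  have hzorn : ∀ c ⊆ s, IsChain (· ≤ ·) c → ∀ y ∈ c, ∃ ub ∈ s, ∀ z ∈ c, z ≤ ub := by
    intro c hcs hchain y hyc
    set c' : Set (TwoSidedIdeal A) := OrderDual.ofDual '' c with hc'
    have hchain' : IsChain (· ≤ ·) c' := by
      rintro _ ⟨p, hp, rfl⟩ _ ⟨q, hq, rfl⟩ hpq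
      rcases hchain hp hq (fun h => hpq (congrArg _ h)) with h | h
      · exact Or.inr h
      · exact Or.inl h
    have hprime := chain_sInf_prime c' hchain' ⟨OrderDual.ofDual y, y, hyc, rfl⟩
      (fun Q hQ => by obtain ⟨q, hq, rfl⟩ := hQ; exact (hcs hq).1)
    refine ⟨OrderDual.toDual (sInf c'), ⟨hprime, ?_, ?_⟩, ?_⟩
    · intro x hx
      exact (TwoSidedIdeal.mem_sInf A).2 (fun Q hQ => by
        obtain ⟨q, hq, rfl⟩ := hQ; exact (hcs hq).2.1 hx)
    · exact le_trans (sInf_le ⟨y, hyc, rfl⟩) (hcs hyc).2.2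
    · intro z hz
      exact (sInf_le (⟨z, hz, rfl⟩ : OrderDual.ofDual z ∈ c') :
        sInf c' ≤ OrderDual.ofDual z)
  obtain ⟨m, hxm, hm⟩ := zorn_le_nonempty₀ s hzorn (OrderDual.toDual Q'') ⟨hQ'', hX, le_rfl⟩
  refine ⟨OrderDual.ofDual m, ⟨hm.prop.1, hm.prop.2.1, ?_⟩, hm.prop.2.2⟩
  intro Q' hQ' hXQ' hle
  exact congrArg OrderDual.ofDual
    (hm.eq_of_le (y := OrderDual.toDual Q') ⟨hQ', hXQ', le_trans hle hm.prop.2.2⟩ hle).symm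

lemma exists_preimage_list {R S : Type*} [Ring R] [Ring S] (f : R →+* S) (I : Set R) :
    ∀ l : List S, (∀ x ∈ l, x ∈ f '' I) → ∃ m : List R, m.map f = l ∧ ∀ x ∈ m, x ∈ I := by
  intro l
  induction l with
  | nil => exact fun _ => ⟨[], rfl, by simp⟩
  | cons a l ih =>
    intro h
    obtain ⟨m, hm, hmI⟩ := ih (fun x hx => h x (List.mem_cons_of_mem _ hx))
    obtain ⟨r, hrI, hr⟩ := h a (List.mem_cons_self (a := a) (l := l))
    refine ⟨r :: m, by simp [hm, hr], ?_⟩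
    intro x hx
    rcases List.mem_cons.1 hx with rfl | hx
    · exact hrI
    · exact hmI x hx

/-- Suppose that for every prime `P` of `S`, `√(f⁻¹(P))` is
nilpotent modulo `f⁻¹(P)`. Then for every ideal `I` of `R`,
`r^{[-1]}(V_R(I)) = {P : f⁻¹(P) ⊇ I^t for some t ≥ 1}
              = {P : P ⊇ f(I)^t for some t ≥ 1} = ⋃_{t ≥ 1} V_S(f(I)^t)`,
where `f(I)^t` denotes the set of products of `t` elements of `f(I)` (and `I^t` the
set of products of `t` elements of `I`). -/
theorem statement_17 {R S : Type*} [Ring R] [Ring S] (f : R →+* S)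
    (hnil : ∀ P : TwoSidedIdeal S, IsPrimeTwoSided P → ∃ t : ℕ, 0 < t ∧
      ∀ l : List R, l.length = t → (∀ x ∈ l, x ∈ primeRad (f ⁻¹' (P : Set S))) →
        l.prod ∈ f ⁻¹' (P : Set S)) :
    ∀ I : TwoSidedIdeal R,
      ({P | IsPrimeTwoSided P ∧ rCorr f P ⊆ zarV (I : Set R)} =
        {P | IsPrimeTwoSided P ∧ ∃ t : ℕ, 0 < t ∧
          ∀ l : List R, l.length = t → (∀ x ∈ l, x ∈ I) → l.prod ∈ f ⁻¹' (P : Set S)}) ∧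
      ({P | IsPrimeTwoSided P ∧ ∃ t : ℕ, 0 < t ∧
          ∀ l : List R, l.length = t → (∀ x ∈ l, x ∈ I) → l.prod ∈ f ⁻¹' (P : Set S)} =
        {P | IsPrimeTwoSided P ∧ ∃ t : ℕ, 0 < t ∧
          ∀ l : List S, l.length = t → (∀ x ∈ l, x ∈ f '' (I : Set R)) → l.prod ∈ P}) ∧
      ({P | IsPrimeTwoSided P ∧ ∃ t : ℕ, 0 < t ∧
          ∀ l : List S, l.length = t → (∀ x ∈ l, x ∈ f '' (I : Set R)) → l.prod ∈ P} =
        ⋃ t ∈ {t : ℕ | 0 < t},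
          zarV {z : S | ∃ l : List S, l.length = t ∧
            (∀ x ∈ l, x ∈ f '' (I : Set R)) ∧ z = l.prod}) := by

  intro I
  refine ⟨?_, ?_, ?_⟩
  · ext P
    simp only [Set.mem_setOf_eq]
    constructor
    · rintro ⟨hP, hsub⟩
      refine ⟨hP, ?_⟩
      obtain ⟨t, ht, hrad⟩ := hnil P hP
      refine ⟨t, ht, fun l hl hlI => hrad l hl (fun x hx => ?_)⟩
      simp only [primeRad, Set.mem_setOf_eq]
      intro Q'' hQ'' hXQ''
      obtain ⟨Q, hQmin, hQle⟩ := exists_minimal_prime _ Q'' hQ'' hXQ''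
      have hQr : Q ∈ rCorr f P := hQmin
      exact hQle ((hsub hQr).2 (hlI x hx))
    · rintro ⟨hP, t, ht, hprod⟩
      refine ⟨hP, ?_⟩
      rintro Q ⟨hQprime, hQsub, _⟩
      exact ⟨hQprime,
        pow_subset_prime t ht I Q hQprime (fun l hl hlI => hQsub (hprod l hl hlI))⟩
  · ext P
    simp only [Set.mem_setOf_eq]
    refine and_congr_right fun _ => ⟨?_, ?_⟩
    · rintro ⟨t, ht, h⟩
      refine ⟨t, ht, fun l hl hlI => ?_⟩
      obtain ⟨m, hm, hmI⟩ := exists_preimage_list f I l hlI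
      have hml : m.length = t := by rw [← hl, ← hm, List.length_map]
      have hmem := h m hml hmI
      have hprod : l.prod = f m.prod := by rw [← hm, map_list_prod]
      rw [hprod]
      exact hmem
    · rintro ⟨t, ht, h⟩
      refine ⟨t, ht, fun l hl hlI => ?_⟩
      have hmem := h (l.map f) (by simp [hl]) (fun x hx => by
        obtain ⟨r, hr, rfl⟩ := List.mem_map.1 hx
        exact ⟨r, hlI r hr, rfl⟩)
      rw [← map_list_prod] at hmem
      exact hmem
  · ext P
    simp only [Set.mem_setOf_eq, Set.mem_iUnion]
    constructor
    · rintro ⟨hP, t, ht, h⟩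
      refine ⟨t, ht, hP, ?_⟩
      rintro z ⟨l, hl1, hl2, rfl⟩
      exact h l hl1 hl2
    · rintro ⟨t, ht, hP, h⟩
      exact ⟨hP, t, ht, fun l hl1 hl2 => h ⟨l, hl1, hl2, rfl⟩⟩
end

section
/- Let f : R → S be a ring homomorphism such that f^{-1}(P) is a semiprime ideal of R for every prime ideal P of S. Then for every ideal I of R, r^{[-1]}V_R(I) = {P ∈ Spec S : f^{-1}(P) ⊇ I} = V_S(f(I)); in particular, the correspondence r : Spec S → Spec R is continuous. -/
section Aux
variable {A : Type*} [Ring A]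

lemma sInf_chain_prime {c : Set (TwoSidedIdeal A)} (hc : IsChain (· ≤ ·) c)
    (hne : c.Nonempty) (hp : ∀ Q ∈ c, IsPrimeTwoSided Q) : IsPrimeTwoSided (sInf c) := by
  obtain ⟨Q0, hQ0⟩ := hne
  constructor
  · intro h
    exact (hp Q0 hQ0).1 (top_le_iff.mp (h ▸ sInf_le hQ0))
  · intro I J hIJ
    by_contra hcon
    push_neg at hcon
    obtain ⟨hI, hJ⟩ := hcon
    obtain ⟨a, haI, ha⟩ := SetLike.not_le_iff_exists.mp hI
    obtain ⟨b, hbJ, hb⟩ := SetLike.not_le_iff_exists.mp hJ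
    rw [TwoSidedIdeal.mem_sInf] at ha hb
    push_neg at ha hb
    obtain ⟨Q1, hQ1c, haQ1⟩ := ha
    obtain ⟨Q2, hQ2c, hbQ2⟩ := hb
    rcases hc.total hQ1c hQ2c with h12 | h21
    · rcases (hp Q1 hQ1c).2 I J (fun x hx y hy =>
        (TwoSidedIdeal.mem_sInf _).mp (hIJ x hx y hy) Q1 hQ1c) with h | h
      · exact haQ1 (h haI)
      · exact hbQ2 (h12 (h hbJ))
    · rcases (hp Q2 hQ2c).2 I J (fun x hx y hy =>
        (TwoSidedIdeal.mem_sInf _).mp (hIJ x hx y hy) Q2 hQ2c) with h | h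
      · exact haQ1 (h21 (h haI))
      · exact hbQ2 (h hbJ)

lemma exists_minimalOver_le {X : Set A} {P : TwoSidedIdeal A} (hP : IsPrimeTwoSided P)
    (hXP : X ⊆ (P : Set A)) : ∃ Q, minimalOver X Q ∧ Q ≤ P := by
  set s : Set (TwoSidedIdeal A)ᵒᵈ :=
    {Q | IsPrimeTwoSided (OrderDual.ofDual Q) ∧ X ⊆ ((OrderDual.ofDual Q : TwoSidedIdeal A) : Set A)
      ∧ OrderDual.ofDual Q ≤ P} with hs
  have hchainub : ∀ c ⊆ s, IsChain (· ≤ ·) c → ∀ y ∈ c, ∃ ub ∈ s, ∀ z ∈ c, z ≤ ub := by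
    intro c hcs hchain y hy
    refine ⟨OrderDual.toDual (sInf (OrderDual.ofDual '' c)), ⟨?_, ?_, ?_⟩, ?_⟩
    · exact sInf_chain_prime (hchain.image_of_map_rel _ _ _ (fun _ _ h => h)).symm
        ⟨_, Set.mem_image_of_mem _ hy⟩ (by rintro Q ⟨q, hqc, rfl⟩; exact (hcs hqc).1)
    · intro x hx
      show x ∈ sInf (OrderDual.ofDual '' c)
      rw [TwoSidedIdeal.mem_sInf]
      rintro Q ⟨q, hqc, rfl⟩
      exact (hcs hqc).2.1 hx
    · exact le_trans (sInf_le (Set.mem_image_of_mem _ hy)) (hcs hy).2.2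
    · intro z hz
      show sInf (OrderDual.ofDual '' c) ≤ OrderDual.ofDual z
      exact sInf_le (Set.mem_image_of_mem _ hz)
  obtain ⟨m, hPm, hms, hmax⟩ := zorn_le_nonempty₀ s hchainub (OrderDual.toDual P) ⟨hP, hXP, le_rfl⟩
  refine ⟨OrderDual.ofDual m, ⟨hms.1, hms.2.1, ?_⟩, hms.2.2⟩
  intro Q' hQ' hXQ' hle
  exact le_antisymm hle (hmax ⟨hQ', hXQ', hle.trans hms.2.2⟩ hle)

lemma key_eq {R S : Type*} [Ring R] [Ring S] (f : R →+* S)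
    (hsp : ∀ P : TwoSidedIdeal S, IsPrimeTwoSided P →
      primeRad (f ⁻¹' (P : Set S)) = f ⁻¹' (P : Set S)) (X : Set R) :
    {P | IsPrimeTwoSided P ∧ rCorr f P ⊆ zarV X} =
      {P | IsPrimeTwoSided P ∧ X ⊆ f ⁻¹' (P : Set S)} := by
  ext P
  constructor
  · rintro ⟨hP, hsub⟩
    refine ⟨hP, ?_⟩
    intro x hx
    rw [← hsp P hP]
    intro Q hQ hfQ
    obtain ⟨Q0, hQ0min, hQ0le⟩ := exists_minimalOver_le hQ hfQ
    exact hQ0le ((hsub hQ0min).2 hx)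
  · rintro ⟨hP, hsub⟩
    exact ⟨hP, fun Q hQ => ⟨hQ.1, hsub.trans hQ.2.1⟩⟩

lemma snd_eq {R S : Type*} [Ring R] [Ring S] (f : R →+* S) (X : Set R) :
    {P | IsPrimeTwoSided P ∧ X ⊆ f ⁻¹' (P : Set S)} = zarV (f '' X) := by
  ext P
  simp only [Set.mem_setOf_eq, zarV, Set.image_subset_iff]

lemma zarV_span {A : Type*} [Ring A] (X : Set A) :
    zarV X = zarV ((TwoSidedIdeal.span X : TwoSidedIdeal A) : Set A) := by
  ext P
  constructor
  · rintro ⟨hP, hXP⟩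
    exact ⟨hP, fun x hx => TwoSidedIdeal.mem_span_iff.mp hx P hXP⟩
  · rintro ⟨hP, h⟩
    exact ⟨hP, TwoSidedIdeal.subset_span.trans h⟩

end Aux

/-- Suppose `f⁻¹(P)` is a semiprime ideal of `R` for every prime `P`
of `S`. Then for every ideal `I` of `R`,
`r^{[-1]}(V_R(I)) = {P ∈ Spec S : f⁻¹(P) ⊇ I} = V_S(f(I))`; in particular, the
correspondence `r : Spec S → Spec R` is continuous (the `r^{[-1]}`-preimage of every
closed set `V_R(X)` is closed, i.e. of the form `V_S(Y)`). -/
theorem statement_18 {R S : Type*} [Ring R] [Ring S] (f : R →+* S)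
    (hsp : ∀ P : TwoSidedIdeal S, IsPrimeTwoSided P →
      primeRad (f ⁻¹' (P : Set S)) = f ⁻¹' (P : Set S)) :
    (∀ I : TwoSidedIdeal R,
      ({P | IsPrimeTwoSided P ∧ rCorr f P ⊆ zarV (I : Set R)} =
        {P | IsPrimeTwoSided P ∧ (I : Set R) ⊆ f ⁻¹' (P : Set S)}) ∧
      ({P | IsPrimeTwoSided P ∧ (I : Set R) ⊆ f ⁻¹' (P : Set S)} =
        zarV (f '' (I : Set R)))) ∧
    (∀ X : Set R, ∃ Y : Set S,
      {P | IsPrimeTwoSided P ∧ rCorr f P ⊆ zarV X} = zarV Y) := by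
  refine ⟨fun I => ⟨key_eq f hsp _, snd_eq f _⟩, fun X => ?_⟩
  refine ⟨f '' ((TwoSidedIdeal.span X : TwoSidedIdeal R) : Set R), ?_⟩
  rw [zarV_span X, key_eq f hsp, snd_eq f]
end
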